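/- Let 1 < p < 2, S an η-sparse family of dyadic cubes, w, σ weights with σ_{Q'} ≥ 1 for all Q' ∈ S, and let [w,σ]_{A_p} = sup_{Q' ∈ S} w_{Q'} σ_{Q'}^{p-1} be finite. Let ψ : [1,∞) → (0,∞) be increasing. Fix Q ∈ S and define E_0 = {Q' ∈ S : Q' ⊆ Q, σ_{Q'} ≤ σ_Q^{1/2}, w_{Q'} σ_{Q'}^{p-1} ≤ [w,σ]_{A_p}/ψ(σ_Q)}. Then ∑_{Q' ∈ E_0} σ_{Q'} w(Q') ≤ C ([w,σ]_{A_p}/ψ(σ_Q)) σ_Q^{2-p} |Q|, with C depending only on η, p, n. -/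

import Mathlib

open MeasureTheory Set
open scoped ENNReal

noncomputable section

def dyadicCube (n : ℕ) (k : ℤ) (m : Fin n → ℤ) : Set (Fin n → ℝ) :=
  {x | ∀ i, (m i : ℝ) * (2:ℝ) ^ k ≤ x i ∧ x i < ((m i : ℝ) + 1) * (2:ℝ) ^ k}

def IsDyadicCube {n : ℕ} (Q : Set (Fin n → ℝ)) : Prop := ∃ k m, Q = dyadicCube n k m

def IsCube {n : ℕ} (Q : Set (Fin n → ℝ)) : Prop :=
  ∃ (a : Fin n → ℝ) (h : ℝ), 0 < h ∧ Q = {x | ∀ i, a i ≤ x i ∧ x i < a i + h}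

def IsSparse {n : ℕ} (η : ℝ≥0∞) (S : Set (Set (Fin n → ℝ))) : Prop :=
  (∀ Q ∈ S, IsDyadicCube Q) ∧
  ∃ E : Set (Fin n → ℝ) → Set (Fin n → ℝ),
    (∀ Q ∈ S, E Q ⊆ Q ∧ MeasurableSet (E Q) ∧ η * volume Q ≤ volume (E Q)) ∧
    S.PairwiseDisjoint E

def mass {n : ℕ} (w : (Fin n → ℝ) → ℝ≥0∞) (Q : Set (Fin n → ℝ)) : ℝ≥0∞ := ∫⁻ x in Q, w x

def avg {n : ℕ} (w : (Fin n → ℝ) → ℝ≥0∞) (Q : Set (Fin n → ℝ)) : ℝ≥0∞ := mass w Q / volume Q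

def maximalOp {n : ℕ} (f : (Fin n → ℝ) → ℝ≥0∞) (x : Fin n → ℝ) : ℝ≥0∞ :=
  ⨆ (Q : Set (Fin n → ℝ)) (_ : IsCube Q) (_ : x ∈ Q), avg f Q

/-! Writing `K = [w,σ]_{A_p} / ψ(σ_Q)`, each term factors as
`σ_{Q'} w(Q') = (w_{Q'} σ_{Q'}^{p-1}) σ_{Q'}^{2-p} |Q'| ≤ K σ_Q^{2-p} |Q'|`, since
`σ_{Q'} ≤ σ_Q^{1/2} ≤ σ_Q`. Sparseness then bounds `∑ |Q'|` over the subcubes of `Q` by `|Q| / η`,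
so one may take `C = η⁻¹`. -/

theorem ENNReal.rpow_le_self_of_one_le {x : ℝ≥0∞} {z : ℝ} (hx : 1 ≤ x) (hz : z ≤ 1) :
    x ^ z ≤ x := by
  simpa only [ENNReal.rpow_one] using ENNReal.rpow_le_rpow_of_exponent_le hx hz

theorem ENNReal.mul_le_mul_of_mul_rpow_le {s a K X : ℝ≥0∞} {r t : ℝ} (hr : 0 ≤ r) (ht : 0 ≤ t)
    (hrt : r + t = 1) (hK : a * s ^ r ≤ K) (hX : s ^ t ≤ X) : s * a ≤ K * X :=
  calc s * a = a * s ^ r * s ^ t := by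
        rw [mul_assoc, ← ENNReal.rpow_add_of_nonneg r t hr ht, hrt, ENNReal.rpow_one, mul_comm]
    _ ≤ K * X := mul_le_mul' hK hX

theorem dyadicCube_eq_pi (n : ℕ) (k : ℤ) (m : Fin n → ℤ) :
    dyadicCube n k m = univ.pi fun i => Ico ((m i : ℝ) * 2 ^ k) (((m i : ℝ) + 1) * 2 ^ k) := by
  ext x
  simp [dyadicCube, Set.mem_pi, Set.mem_Ico]

theorem volume_dyadicCube (n : ℕ) (k : ℤ) (m : Fin n → ℤ) :
    volume (dyadicCube n k m) = ENNReal.ofReal (2 ^ k) ^ n := by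
  simp only [dyadicCube_eq_pi, volume_pi_pi, Real.volume_Ico, add_mul, one_mul,
    add_sub_cancel_left, Finset.prod_const, Finset.card_univ, Fintype.card_fin]

theorem IsDyadicCube.volume_ne_zero {n : ℕ} {Q : Set (Fin n → ℝ)} (hQ : IsDyadicCube Q) :
    volume Q ≠ 0 := by
  obtain ⟨k, m, rfl⟩ := hQ
  rw [volume_dyadicCube]
  exact pow_ne_zero _ (ENNReal.ofReal_pos.2 (zpow_pos two_pos k)).ne'

theorem IsDyadicCube.volume_ne_top {n : ℕ} {Q : Set (Fin n → ℝ)} (hQ : IsDyadicCube Q) :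
    volume Q ≠ ∞ := by
  obtain ⟨k, m, rfl⟩ := hQ
  rw [volume_dyadicCube]
  exact ENNReal.pow_ne_top ENNReal.ofReal_ne_top

theorem mass_eq_avg_mul_volume {n : ℕ} (w : (Fin n → ℝ) → ℝ≥0∞) {Q : Set (Fin n → ℝ)}
    (h0 : volume Q ≠ 0) (htop : volume Q ≠ ∞) : mass w Q = avg w Q * volume Q :=
  (ENNReal.div_mul_cancel h0 htop).symm

theorem IsSparse.tsum_volume_le {n : ℕ} {η : ℝ≥0∞} {S T : Set (Set (Fin n → ℝ))}
    (hS : IsSparse η S) (hη : η ≠ 0) (hTS : T ⊆ S) {Q : Set (Fin n → ℝ)} (hQ : volume Q ≠ ∞)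
    (hTQ : ∀ Q' ∈ T, Q' ⊆ Q) :
    ∑' Q' : T, volume (Q' : Set (Fin n → ℝ)) ≤ volume Q / η := by
  obtain ⟨-, E, hE, hdisj⟩ := hS
  have hEdisj : Pairwise (Function.onFun Disjoint fun Q' : T => E Q') := fun i j hij =>
    hdisj (hTS i.2) (hTS j.2) (Subtype.coe_injective.ne hij)
  rw [ENNReal.le_div_iff_mul_le (.inl hη) (.inr hQ), mul_comm, ← ENNReal.tsum_mul_left]
  calc ∑' Q' : T, η * volume (Q' : Set (Fin n → ℝ))
      ≤ ∑' Q' : T, volume (E Q') := ENNReal.tsum_le_tsum fun Q' => (hE Q' (hTS Q'.2)).2.2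
    _ ≤ volume (⋃ Q' : T, E Q') :=
        tsum_meas_le_meas_iUnion_of_disjoint _ (fun Q' => (hE Q' (hTS Q'.2)).2.1) hEdisj
    _ ≤ volume Q :=
        measure_mono <| iUnion_subset fun Q' => (hE Q' (hTS Q'.2)).1.trans (hTQ Q' Q'.2)

theorem avg_mul_mass_le_of_avg_le_sqrt {n : ℕ} {w σ : (Fin n → ℝ) → ℝ≥0∞}
    {Q Q' : Set (Fin n → ℝ)} {p : ℝ} {K : ℝ≥0∞} (hp1 : 1 ≤ p) (hp2 : p ≤ 2) (hQ' : IsDyadicCube Q')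
    (hσQ : 1 ≤ avg σ Q) (hsqrt : avg σ Q' ≤ avg σ Q ^ (2:ℝ)⁻¹)
    (hK : avg w Q' * avg σ Q' ^ (p - 1) ≤ K) :
    avg σ Q' * mass w Q' ≤ K * avg σ Q ^ (2 - p) * volume Q' := by
  have hX : avg σ Q' ^ (2 - p) ≤ avg σ Q ^ (2 - p) := ENNReal.rpow_le_rpow
    (hsqrt.trans (ENNReal.rpow_le_self_of_one_le hσQ (by norm_num))) (by linarith)
  rw [mass_eq_avg_mul_volume w hQ'.volume_ne_zero hQ'.volume_ne_top, ← mul_assoc]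
  exact mul_le_mul_left (ENNReal.mul_le_mul_of_mul_rpow_le (r := p - 1)
    (by linarith) (by linarith) (by ring) hK hX) _

theorem statement15_general (eta : ℝ≥0∞) (heta0 : 0 < eta) (p : ℝ)
    (hp1 : 1 < p) (hp2 : p < 2) (n : ℕ) :
    ∃ C : ℝ≥0∞, C < ∞ ∧
      ∀ (w σ : (Fin n → ℝ) → ℝ≥0∞), Measurable w → Measurable σ →
      ∀ (S : Set (Set (Fin n → ℝ))), IsSparse eta S →
      (∀ Q' ∈ S, 1 ≤ avg σ Q') →
      (⨆ (Q' : Set (Fin n → ℝ)) (_ : Q' ∈ S), avg w Q' * (avg σ Q') ^ (p-1)) < ∞ →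
      ∀ (ψ : ℝ≥0∞ → ℝ≥0∞), MonotoneOn ψ (Set.Ici 1) → (∀ t, 0 < ψ t) →
      ∀ Q ∈ S,
      ∑' Q' : {Q' : Set (Fin n → ℝ) // Q' ∈ S ∧ Q' ⊆ Q ∧
          avg σ Q' ≤ (avg σ Q) ^ ((2:ℝ)⁻¹) ∧
          avg w Q' * (avg σ Q') ^ (p-1) ≤
            (⨆ (P : Set (Fin n → ℝ)) (_ : P ∈ S), avg w P * (avg σ P) ^ (p-1)) / ψ (avg σ Q)},
        avg σ Q'.1 * mass w Q'.1
      ≤ C * ((⨆ (P : Set (Fin n → ℝ)) (_ : P ∈ S), avg w P * (avg σ P) ^ (p-1)) / ψ (avg σ Q)) *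
          (avg σ Q) ^ (2-p) * volume Q := by
  refine ⟨eta⁻¹, ENNReal.inv_lt_top.2 heta0, ?_⟩
  intro w σ _ _ S hS hσ _ ψ _ _ Q hQ
  refine (ENNReal.tsum_le_tsum fun Q' => avg_mul_mass_le_of_avg_le_sqrt hp1.le hp2.le
    (hS.1 _ Q'.2.1) (hσ Q hQ) Q'.2.2.2.1 Q'.2.2.2.2).trans ?_
  set K := (⨆ (P : Set (Fin n → ℝ)) (_ : P ∈ S), avg w P * (avg σ P) ^ (p-1)) / ψ (avg σ Q)
  rw [ENNReal.tsum_mul_left]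
  calc _ ≤ K * avg σ Q ^ (2 - p) * (volume Q / eta) := by
        gcongr
        exact hS.tsum_volume_le heta0.ne' (fun _ h => h.1) (hS.1 Q hQ).volume_ne_top
          fun _ h => h.2.1
    _ = _ := by rw [div_eq_mul_inv]; ring

theorem statement15 (eta : ℝ≥0∞) (heta0 : 0 < eta) (heta1 : eta ≤ 1) (p : ℝ)
    (hp1 : 1 < p) (hp2 : p < 2) (n : ℕ) :
    ∃ C : ℝ≥0∞, C < ∞ ∧
      ∀ (w σ : (Fin n → ℝ) → ℝ≥0∞), Measurable w → Measurable σ →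
      ∀ (S : Set (Set (Fin n → ℝ))), IsSparse eta S →
      (∀ Q' ∈ S, 1 ≤ avg σ Q') →
      (⨆ (Q' : Set (Fin n → ℝ)) (_ : Q' ∈ S), avg w Q' * (avg σ Q') ^ (p-1)) < ∞ →
      ∀ (ψ : ℝ≥0∞ → ℝ≥0∞), MonotoneOn ψ (Set.Ici 1) → (∀ t, 0 < ψ t) →
      ∀ Q ∈ S,
      ∑' Q' : {Q' : Set (Fin n → ℝ) // Q' ∈ S ∧ Q' ⊆ Q ∧
          avg σ Q' ≤ (avg σ Q) ^ ((2:ℝ)⁻¹) ∧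
          avg w Q' * (avg σ Q') ^ (p-1) ≤
            (⨆ (P : Set (Fin n → ℝ)) (_ : P ∈ S), avg w P * (avg σ P) ^ (p-1)) / ψ (avg σ Q)},
        avg σ Q'.1 * mass w Q'.1
      ≤ C * ((⨆ (P : Set (Fin n → ℝ)) (_ : P ∈ S), avg w P * (avg σ P) ^ (p-1)) / ψ (avg σ Q)) *
          (avg σ Q) ^ (2-p) * volume Q :=
  statement15_general eta heta0 p hp1 hp2 n
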